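/- arXiv:0903.0352 — 3 statements merged into one kernel-verified Lean document; each statement's English description precedes it below -/
import Mathlib

section
/- Suppose A is a noetherian scheme, B is a scheme, and f : A → B and g : B → A are both closed immersions. If f ∘ g = id_B, then g ∘ f = id_A. -/
open CategoryTheory AlgebraicGeometry

/-- If `A` is a noetherian scheme and `f : A ⟶ B`, `g : B ⟶ A` are closed immersions
with `f ∘ g = id_B` (i.e. `g ≫ f = 𝟙 B`), then `g ∘ f = id_A` (i.e. `f ≫ g = 𝟙 A`). -/
theorem stmt2 {A B : Scheme} [IsNoetherian A] (f : A ⟶ B) (g : B ⟶ A)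
    [IsClosedImmersion f] [IsClosedImmersion g] (h : g ≫ f = 𝟙 B) :
    f ≫ g = 𝟙 A := by
  have : Mono f := inferInstance
  have : IsSplitEpi f := ⟨⟨⟨g, h⟩⟩⟩
  have : IsIso f := isIso_of_mono_of_isSplitEpi f
  rw [← cancel_mono f, Category.assoc, h, Category.id_comp, Category.comp_id]
end

section
/- Let f : (R,m) → (S,n) be a finite local homomorphism of noetherian commutative local rings and M a finitely generated S-module. Then the depth of M as an S-module equals the depth of M as an R-module (via restriction of scalars). -/
open IsLocalRing

/-- The depth of a module over a noetherian local ring: the supremum of the lengths of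
regular sequences on `M` consisting of elements of the maximal ideal. -/
noncomputable def moduleDepth (R M : Type*) [CommRing R] [IsLocalRing R]
    [AddCommGroup M] [Module R M] : ℕ∞ :=
  sSup {n : ℕ∞ | ∃ rs : List R, (rs.length : ℕ∞) = n ∧
    (∀ r ∈ rs, r ∈ maximalIdeal R) ∧ RingTheory.Sequence.IsRegular M rs}



open IsLocalRing Submodule

section AssTheory

variable {A : Type*} [CommRing A] {N : Type*} [AddCommGroup N] [Module A N]

lemma ann_span_singleton_subtype (B : Submodule A N) (y : B) :
    (Submodule.span A {y}).annihilator = (Submodule.span A {(y : N)}).annihilator := by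
  ext r
  simp only [Submodule.mem_annihilator_span_singleton]
  exact ⟨fun h => congrArg Subtype.val h, fun h => Subtype.ext h⟩

lemma mem_associatedPrimes_iff' [IsNoetherianRing A] {p : Ideal A} :
    p ∈ associatedPrimes A N ↔ p.IsPrime ∧ ∃ x : N, p = (Submodule.span A {x}).annihilator := by
  have h : ∀ x : N, (⊥ : Submodule A N).colon {x} = (Submodule.span A {x}).annihilator := by
    intro x
    ext r
    rw [Submodule.mem_colon_singleton, Submodule.mem_bot,
      Submodule.mem_annihilator_span_singleton]
  rw [AssociatedPrimes.mem_iff, isAssociatedPrime_iff]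
  simp only [h]

/-- Associated primes of a module are among those of a submodule and the quotient. -/
lemma associatedPrimes_subset_union [IsNoetherianRing A] (B : Submodule A N) :
    associatedPrimes A N ⊆ associatedPrimes A B ∪ associatedPrimes A (N ⧸ B) := by
  rintro p hp'
  obtain ⟨hp, x, rfl⟩ := mem_associatedPrimes_iff'.mp hp'
  by_cases h : ∃ s : A, s • x ∈ B ∧ s • x ≠ 0
  · obtain ⟨s, hsB, hs0⟩ := h
    left
    refine mem_associatedPrimes_iff'.mpr ⟨hp, ⟨s • x, hsB⟩, ?_⟩
    rw [ann_span_singleton_subtype]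
    ext r
    simp only [Submodule.mem_annihilator_span_singleton]
    constructor
    · intro hr
      rw [smul_comm, hr, smul_zero]
    · intro hr
      have hrs : (r * s) • x = 0 := by rw [mul_smul]; exact hr
      have : r * s ∈ (span A {x}).annihilator :=
        (Submodule.mem_annihilator_span_singleton _ _).mpr hrs
      rcases hp.mem_or_mem this with h1 | h2
      · exact (Submodule.mem_annihilator_span_singleton _ _).mp h1
      · exact absurd ((Submodule.mem_annihilator_span_singleton _ _).mp h2) hs0
  · push_neg at h
    right
    refine mem_associatedPrimes_iff'.mpr ⟨hp, B.mkQ x, ?_⟩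
    ext r
    simp only [Submodule.mem_annihilator_span_singleton]
    show r • x = 0 ↔ Submodule.Quotient.mk (r • x) = (0 : N ⧸ B)
    rw [Submodule.Quotient.mk_eq_zero]
    exact ⟨fun hr => hr ▸ B.zero_mem, fun hr => h r hr⟩


lemma associatedPrimes_span_singleton_subset [IsNoetherianRing A] {v : N}
    (hp : (Submodule.span A {v}).annihilator.IsPrime) :
    associatedPrimes A (Submodule.span A {v} : Submodule A N) ⊆
      {(Submodule.span A {v}).annihilator} := by
  rintro q hq'
  obtain ⟨hq, w, rfl⟩ := mem_associatedPrimes_iff'.mp hq'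
  rw [ann_span_singleton_subtype] at hq ⊢
  obtain ⟨s, hw⟩ := Submodule.mem_span_singleton.mp w.2
  rw [← hw] at hq ⊢
  have hs : s • v ≠ 0 := by
    intro h0
    rw [h0, Submodule.span_singleton_eq_bot.mpr rfl, Submodule.annihilator_bot] at hq
    exact hq.ne_top rfl
  show (Submodule.span A {s • v}).annihilator = (Submodule.span A {v}).annihilator
  ext a
  simp only [Submodule.mem_annihilator_span_singleton]
  constructor
  · intro ha
    have : (a * s) • v = 0 := by rw [mul_smul]; exact ha
    rcases hp.mem_or_mem ((Submodule.mem_annihilator_span_singleton _ _).mpr this) with h1 | h2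
    · exact (Submodule.mem_annihilator_span_singleton _ _).mp h1
    · exact absurd ((Submodule.mem_annihilator_span_singleton _ _).mp h2) hs
  · intro ha
    rw [smul_comm, ha, smul_zero]

lemma associatedPrimes_finite [IsNoetherianRing A] [Module.Finite A N] :
    (associatedPrimes A N).Finite := by
  have hN : IsNoetherian A N := isNoetherian_of_isNoetherianRing_of_finite A N
  obtain ⟨B, hB, hmax⟩ := set_has_maximal_iff_noetherian.mpr hN
    {B : Submodule A N | (associatedPrimes A B).Finite}
    ⟨⊥, by
      have : Subsingleton (⊥ : Submodule A N) := inferInstance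
      simp only [Set.mem_setOf_eq, associatedPrimes.eq_empty_of_subsingleton]
      exact Set.finite_empty⟩
  rcases eq_or_ne B ⊤ with rfl | hBne
  · rwa [Set.mem_setOf_eq, LinearEquiv.AssociatedPrimes.eq Submodule.topEquiv] at hB
  · exfalso
    have : Nontrivial (N ⧸ B) :=
      Submodule.Quotient.nontrivial_iff.mpr hBne
    obtain ⟨p, hp⟩ := associatedPrimes.nonempty A (N ⧸ B)
    obtain ⟨hpp, xb, hxb⟩ := mem_associatedPrimes_iff'.mp hp
    obtain ⟨x, rfl⟩ := Submodule.mkQ_surjective B xb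
    set B' : Submodule A N := B ⊔ Submodule.span A {x} with hB'def
    have hBle : B ≤ B' := le_sup_left
    have hxnB : x ∉ B := by
      intro hxB
      have : B.mkQ x = 0 := (Submodule.Quotient.mk_eq_zero B).mpr hxB
      rw [this, Submodule.span_singleton_eq_bot.mpr rfl, Submodule.annihilator_bot] at hxb
      exact hpp.ne_top hxb
    have hlt : B < B' := lt_of_le_of_ne hBle (by
      intro h
      exact hxnB (h ▸ Submodule.mem_sup_right (Submodule.mem_span_singleton_self x)))
    apply hmax B' _ hlt
    -- show B' ∈ the set
    show (associatedPrimes A B').Finite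
    set B0 : Submodule A B' := Submodule.comap B'.subtype B
    have hsub := associatedPrimes_subset_union (N := B') B0
    have h1 : (associatedPrimes A B0).Finite := by
      rw [LinearEquiv.AssociatedPrimes.eq (Submodule.comapSubtypeEquivOfLe hBle)]
      exact hB
    have h2 : (associatedPrimes A (B' ⧸ B0)).Finite := by
      set g : B' →ₗ[A] N ⧸ B := B.mkQ.comp B'.subtype
      have hker : LinearMap.ker g = B0 := by
        rw [LinearMap.ker_comp, Submodule.ker_mkQ]
      have e1 : (B' ⧸ B0) ≃ₗ[A] LinearMap.range g :=
        (Submodule.quotEquivOfEq B0 (LinearMap.ker g) hker.symm).trans g.quotKerEquivRange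
      rw [LinearEquiv.AssociatedPrimes.eq e1]
      have hbot : Submodule.map B.mkQ B = ⊥ := by
        ext y
        simp only [Submodule.mem_map, Submodule.mem_bot]
        constructor
        · rintro ⟨z, hz, rfl⟩
          exact (Submodule.Quotient.mk_eq_zero B).mpr hz
        · rintro rfl
          exact ⟨0, B.zero_mem, map_zero _⟩
      have hrange : LinearMap.range g = Submodule.span A {B.mkQ x} := by
        rw [LinearMap.range_comp, Submodule.range_subtype, hB'def, Submodule.map_sup,
          Submodule.map_span, Set.image_singleton, hbot, bot_sup_eq]
      have e2 : (LinearMap.range g : Submodule A (N ⧸ B)) ≃ₗ[A]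
          (Submodule.span A {B.mkQ x} : Submodule A (N ⧸ B)) := LinearEquiv.ofEq _ _ hrange
      rw [LinearEquiv.AssociatedPrimes.eq e2]
      exact Set.Finite.subset
        (Set.finite_singleton ((Submodule.span A {B.mkQ x}).annihilator))
        (associatedPrimes_span_singleton_subset (hxb ▸ hpp))
    have : (associatedPrimes A B') ⊆ _ := hsub
    exact Set.Finite.subset (h1.union h2) hsub

lemma maximalIdeal_mem_associatedPrimes_iff [IsNoetherianRing A] [IsLocalRing A] :
    maximalIdeal A ∈ associatedPrimes A N ↔
      ∃ y : N, y ≠ 0 ∧ ∀ a ∈ maximalIdeal A, a • y = 0 := by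
  rw [mem_associatedPrimes_iff']
  constructor
  · rintro ⟨hp, y, hy⟩
    refine ⟨y, ?_, ?_⟩
    · rintro rfl
      rw [Submodule.span_singleton_eq_bot.mpr rfl, Submodule.annihilator_bot] at hy
      exact hp.ne_top hy
    · intro a ha
      exact (Submodule.mem_annihilator_span_singleton _ _).mp (hy ▸ ha)
  · rintro ⟨y, hy0, hty⟩
    refine ⟨(maximalIdeal.isMaximal A).isPrime, y, le_antisymm ?_ ?_⟩
    · intro a ha
      exact (Submodule.mem_annihilator_span_singleton _ _).mpr (hty a ha)
    · refine le_maximalIdeal ?_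
      intro h
      have : (1 : A) • y = 0 := (Submodule.mem_annihilator_span_singleton _ _).mp
        (h ▸ Submodule.mem_top)
      rw [one_smul] at this
      exact hy0 this

lemma exists_mem_maximalIdeal_isSMulRegular [IsNoetherianRing A] [IsLocalRing A]
    [Module.Finite A N] (h : maximalIdeal A ∉ associatedPrimes A N) :
    ∃ z ∈ maximalIdeal A, IsSMulRegular N z := by
  by_contra hc
  push_neg at hc
  have hF := associatedPrimes_finite (A := A) (N := N)
  have hsub : (maximalIdeal A : Set A) ⊆ ⋃ p ∈ hF.toFinset, (id p : Ideal A) := by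
    intro z hz
    have : z ∈ { r : A | IsSMulRegular N r }ᶜ := fun hreg => hc z hz hreg
    rw [← biUnion_associatedPrimes_eq_compl_regular A N] at this
    obtain ⟨p, hp, hzp⟩ := Set.mem_iUnion₂.mp this
    exact Set.mem_iUnion₂.mpr ⟨p, hF.mem_toFinset.mpr hp, hzp⟩
  have := (Ideal.subset_union_prime (s := hF.toFinset) (f := id) ⊥ ⊥
    (fun p hp _ _ => (hF.mem_toFinset.mp hp).isPrime)).mp hsub
  obtain ⟨p, hpF, hmp⟩ := this
  have hpAss := hF.mem_toFinset.mp hpF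
  have hpm : p = maximalIdeal A :=
    le_antisymm (le_maximalIdeal hpAss.isPrime.ne_top) hmp
  exact h (hpm ▸ hpAss)

lemma not_mem_associatedPrimes_of_regular [IsNoetherianRing A] [IsLocalRing A] {t : A}
    (ht : t ∈ maximalIdeal A) (hreg : IsSMulRegular N t) :
    maximalIdeal A ∉ associatedPrimes A N := by
  rw [maximalIdeal_mem_associatedPrimes_iff]
  rintro ⟨y, hy0, hty⟩
  exact hy0 (hreg (show t • y = t • 0 by rw [hty t ht, smul_zero]))

open scoped Pointwise in
lemma mem_smul_top_iff' (y : A) (u : N) :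
    u ∈ y • (⊤ : Submodule A N) ↔ ∃ v, y • v = u := by
  constructor
  · intro h
    rw [← SetLike.mem_coe, Submodule.coe_pointwise_smul] at h
    obtain ⟨v, -, hv⟩ := Set.mem_smul_set.mp h
    exact ⟨v, hv⟩
  · rintro ⟨v, rfl⟩
    exact Submodule.smul_mem_pointwise_smul v y ⊤ trivial

open scoped Pointwise in
lemma kaplansky_step [IsNoetherianRing A] [IsLocalRing A] {x y : A} (hx : x ∈ maximalIdeal A)
    (hxreg : IsSMulRegular N x) (hyreg : IsSMulRegular N y)
    (h : maximalIdeal A ∈ associatedPrimes A (QuotSMulTop y N)) :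
    maximalIdeal A ∈ associatedPrimes A (QuotSMulTop x N) := by
  rw [maximalIdeal_mem_associatedPrimes_iff] at h ⊢
  obtain ⟨ub, hu0, htu⟩ := h
  obtain ⟨u, rfl⟩ := Submodule.mkQ_surjective _ ub
  have hunotin : u ∉ y • (⊤ : Submodule A N) := by
    intro hu
    exact hu0 ((Submodule.Quotient.mk_eq_zero _).mpr hu)
  have htor : ∀ a ∈ maximalIdeal A, ∃ w, y • w = a • u := by
    intro a ha
    have := htu a ha
    rw [← map_smul, Submodule.mkQ_apply, Submodule.Quotient.mk_eq_zero] at this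
    exact (mem_smul_top_iff' y (a • u)).mp this
  obtain ⟨v, hv⟩ := htor x hx
  refine ⟨Submodule.mkQ _ v, ?_, ?_⟩
  · intro h0
    rw [Submodule.mkQ_apply, Submodule.Quotient.mk_eq_zero] at h0
    obtain ⟨t, ht⟩ := (mem_smul_top_iff' x v).mp h0
    apply hunotin
    refine (mem_smul_top_iff' y u).mpr ⟨t, hxreg ?_⟩
    show x • (y • t) = x • u
    rw [smul_comm, ht, hv]
  · intro a ha
    obtain ⟨w, hw⟩ := htor a ha
    rw [← map_smul, Submodule.mkQ_apply, Submodule.Quotient.mk_eq_zero]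
    refine (mem_smul_top_iff' x (a • v)).mpr ⟨w, hyreg ?_⟩
    show y • (x • w) = y • (a • v)
    calc y • x • w = x • y • w := smul_comm y x w
      _ = x • a • u := by rw [hw]
      _ = a • x • u := smul_comm x a u
      _ = a • y • v := by rw [hv]
      _ = y • a • v := smul_comm a y v

lemma isSMulRegular_fst {N2 : Type*} [AddCommGroup N2] [Module A N2] {z : A}
    (h : IsSMulRegular (N × N2) z) : IsSMulRegular N z := by
  intro a b e
  have : z • ((a, (0 : N2))) = z • ((b, (0 : N2))) := by
    rw [Prod.smul_mk, Prod.smul_mk]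
    exact Prod.ext e rfl
  exact congrArg Prod.fst (h this)

lemma isSMulRegular_snd {N2 : Type*} [AddCommGroup N2] [Module A N2] {z : A}
    (h : IsSMulRegular (N × N2) z) : IsSMulRegular N2 z := by
  intro a b e
  have : z • (((0 : N), a)) = z • (((0 : N), b)) := by
    rw [Prod.smul_mk, Prod.smul_mk]
    exact Prod.ext rfl e
  exact congrArg Prod.snd (h this)

lemma maximalIdeal_notMem_prod [IsNoetherianRing A] [IsLocalRing A] {N2 : Type*} [AddCommGroup N2] [Module A N2]
    (h1 : maximalIdeal A ∉ associatedPrimes A N) (h2 : maximalIdeal A ∉ associatedPrimes A N2) :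
    maximalIdeal A ∉ associatedPrimes A (N × N2) := by
  rw [maximalIdeal_mem_associatedPrimes_iff]
  rintro ⟨⟨y1, y2⟩, hy0, hty⟩
  by_cases h : y1 = 0
  · subst h
    apply h2
    rw [maximalIdeal_mem_associatedPrimes_iff]
    refine ⟨y2, fun h0 => hy0 (by rw [h0]; rfl), fun a ha => congrArg Prod.snd (hty a ha)⟩
  · apply h1
    rw [maximalIdeal_mem_associatedPrimes_iff]
    exact ⟨y1, h, fun a ha => congrArg Prod.fst (hty a ha)⟩

open scoped Pointwise in
lemma quotSMulTop_nontrivial [IsLocalRing A] [Module.Finite A N] [Nontrivial N] {z : A}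
    (hz : z ∈ maximalIdeal A) : Nontrivial (QuotSMulTop z N) := by
  have hle : Ideal.span {z} ≤ (Module.annihilator A N).jacobson := by
    rw [Ideal.span_le, Set.singleton_subset_iff]
    exact maximalIdeal_le_jacobson (Module.annihilator A N) hz
  have h1 : (⊤ : Submodule A N) ≠ Ideal.span {z} • ⊤ :=
    Submodule.top_ne_ideal_smul_of_le_jacobson_annihilator hle
  have h2 : z • (⊤ : Submodule A N) ≠ ⊤ := by
    rw [← Submodule.ideal_span_singleton_smul]
    exact fun h => h1 h.symm
  exact Submodule.Quotient.nontrivial_iff.mpr h2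

open scoped Pointwise in
/-- Auxiliary equivalence `N/(a,b)N ≃ (N/aN)/b(N/aN)`. -/
noncomputable def quotPairEquiv (a b : A) :
    (N ⧸ (Ideal.ofList [a, b] • ⊤ : Submodule A N)) ≃ₗ[A]
      QuotSMulTop b (QuotSMulTop a N) :=
  (Submodule.quotOfListConsSMulTopEquivQuotSMulTopInner N a [b]).trans
    (Submodule.quotEquivOfEq _ _ (by
      rw [Ideal.ofList_singleton, Submodule.ideal_span_singleton_smul]))

open scoped Pointwise in
/-- `(N/aN)/b ≃ (N/bN)/a`. -/
noncomputable def quotSMulTopSwap (a b : A) :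
    QuotSMulTop b (QuotSMulTop a N) ≃ₗ[A] QuotSMulTop a (QuotSMulTop b N) :=
  ((quotPairEquiv (N := N) a b).symm.trans
    (Submodule.quotEquivOfEq _ _ (by
      congr 1
      exact congrArg Ideal.span (Set.ext fun t => by simp [or_comm])))).trans
    (quotPairEquiv (N := N) b a)

end AssTheory

open RingTheory.Sequence in
lemma exchange_reg {A : Type*} [CommRing A] [IsNoetherianRing A] [IsLocalRing A] :
    ∀ (k : ℕ) (N : Type v) [AddCommGroup N] [Module A N] [Module.Finite A N]
      (ts : List A), ts.length = k + 1 → (∀ t ∈ ts, t ∈ IsLocalRing.maximalIdeal A) →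
      IsWeaklyRegular N ts → ∀ z ∈ IsLocalRing.maximalIdeal A, IsSMulRegular N z →
      ∃ ts' : List A, ts'.length = k ∧ (∀ t ∈ ts', t ∈ IsLocalRing.maximalIdeal A) ∧
        IsWeaklyRegular (QuotSMulTop z N) ts' := by
  intro k
  induction k with
  | zero =>
    intro N _ _ _ ts _ _ _ z _ _
    exact ⟨[], rfl, by simp, IsWeaklyRegular.nil A _⟩
  | succ k ih =>
    intro N _ _ _ ts hlen hmem hreg z hz hzreg
    rcases ts with _ | ⟨t1, _ | ⟨t2, ts2⟩⟩ <;> simp only [List.length] at hlen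
    · omega
    · omega
    rw [isWeaklyRegular_cons_iff] at hreg
    obtain ⟨ht1reg, hreg1⟩ := hreg
    have ht2reg : IsSMulRegular (QuotSMulTop t1 N) t2 :=
      ((isWeaklyRegular_cons_iff _ _ _).mp hreg1).1
    have ht1m : t1 ∈ IsLocalRing.maximalIdeal A := hmem _ (by simp)
    have ht2m : t2 ∈ IsLocalRing.maximalIdeal A := hmem _ (by simp)
    have hAss1 : IsLocalRing.maximalIdeal A ∉ associatedPrimes A (QuotSMulTop t1 N) :=
      not_mem_associatedPrimes_of_regular ht2m ht2reg
    have hAssz : IsLocalRing.maximalIdeal A ∉ associatedPrimes A (QuotSMulTop z N) :=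
      fun h => hAss1 (kaplansky_step ht1m ht1reg hzreg h)
    obtain ⟨z2, hz2m, hz2reg⟩ := exists_mem_maximalIdeal_isSMulRegular
      (N := QuotSMulTop z N × QuotSMulTop t1 N) (maximalIdeal_notMem_prod hAssz hAss1)
    have hz2regz : IsSMulRegular (QuotSMulTop z N) z2 := isSMulRegular_fst hz2reg
    have hz2reg1 : IsSMulRegular (QuotSMulTop t1 N) z2 := isSMulRegular_snd hz2reg
    obtain ⟨us, huslen, husmem, husreg⟩ := ih (QuotSMulTop t1 N) (t2 :: ts2)
      (by simp; omega) (fun t ht => hmem t (List.mem_cons_of_mem _ ht)) hreg1 z2 hz2m hz2reg1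
    have husreg' : IsWeaklyRegular (QuotSMulTop t1 (QuotSMulTop z2 N)) us :=
      ((quotSMulTopSwap t1 z2).isWeaklyRegular_congr us).mp husreg
    haveI : IsNoetherian A N := isNoetherian_of_isNoetherianRing_of_finite A N
    have hpair : IsWeaklyRegular N [t1, z2] :=
      IsWeaklyRegular.cons ht1reg ((isWeaklyRegular_singleton_iff _ _).mpr hz2reg1)
    have hswap : IsWeaklyRegular N [z2, t1] :=
      IsLocalRing.isWeaklyRegular_of_perm_of_subset_maximalIdeal hpair
        (List.Perm.swap z2 t1 []) (by
          intro r hr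
          simp only [List.mem_cons, List.not_mem_nil, or_false] at hr
          rcases hr with rfl | rfl
          exacts [ht1m, hz2m])
    have ht1regz2 : IsSMulRegular (QuotSMulTop z2 N) t1 :=
      ((isWeaklyRegular_singleton_iff _ _).mp
        (((isWeaklyRegular_cons_iff _ _ _).mp hswap).2))
    have hpair2 : IsWeaklyRegular N [z, z2] :=
      IsWeaklyRegular.cons hzreg ((isWeaklyRegular_singleton_iff _ _).mpr hz2regz)
    have hswap2 : IsWeaklyRegular N [z2, z] :=
      IsLocalRing.isWeaklyRegular_of_perm_of_subset_maximalIdeal hpair2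
        (List.Perm.swap z2 z []) (by
          intro r hr
          simp only [List.mem_cons, List.not_mem_nil, or_false] at hr
          rcases hr with rfl | rfl
          exacts [hz, hz2m])
    have hzregz2 : IsSMulRegular (QuotSMulTop z2 N) z :=
      ((isWeaklyRegular_singleton_iff _ _).mp
        (((isWeaklyRegular_cons_iff _ _ _).mp hswap2).2))
    obtain ⟨vs, hvslen, hvsmem, hvsreg⟩ := ih (QuotSMulTop z2 N) (t1 :: us)
      (by simp [huslen]) (by
        intro t ht
        rcases List.mem_cons.mp ht with rfl | ht
        · exact ht1m
        · exact husmem t ht)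
      (IsWeaklyRegular.cons ht1regz2 husreg') z hz hzregz2
    have hvsreg' : IsWeaklyRegular (QuotSMulTop z2 (QuotSMulTop z N)) vs :=
      ((quotSMulTopSwap z2 z).isWeaklyRegular_congr vs).mp hvsreg
    refine ⟨z2 :: vs, by simp [hvslen], ?_, IsWeaklyRegular.cons hz2regz hvsreg'⟩
    intro t ht
    rcases List.mem_cons.mp ht with rfl | ht
    · exact hz2m
    · exact hvsmem t ht

open RingTheory.Sequence IsLocalRing in
lemma main_T {R S : Type*} [CommRing R] [CommRing S] [IsLocalRing R] [IsLocalRing S]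
    [IsNoetherianRing R] [IsNoetherianRing S] [Algebra R S] [Module.Finite R S]
    [IsLocalHom (algebraMap R S)] :
    ∀ (k : ℕ) (N : Type v) [AddCommGroup N] [Module S N] [Module.Finite S N]
      (ss : List S), ss.length = k → (∀ t ∈ ss, t ∈ maximalIdeal S) →
      IsWeaklyRegular N ss →
      ∃ rs : List R, rs.length = k ∧ (∀ r ∈ rs, r ∈ maximalIdeal R) ∧
        IsWeaklyRegular N (rs.map (algebraMap R S)) := by
  haveI : Algebra.IsIntegral R S := Algebra.IsIntegral.of_finite R S
  intro k
  induction k with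
  | zero =>
    intro N _ _ _ ss _ _ _
    exact ⟨[], rfl, by simp, by simpa using IsWeaklyRegular.nil S N⟩
  | succ k ih =>
    intro N _ _ _ ss hlen hmem hreg
    have hregcopy := hreg
    rcases ss with _ | ⟨s1, ss1⟩
    · simp at hlen
    rw [isWeaklyRegular_cons_iff] at hreg
    obtain ⟨hs1reg, -⟩ := hreg
    have hs1m : s1 ∈ maximalIdeal S := hmem _ (by simp)
    have hAss : maximalIdeal S ∉ associatedPrimes S N :=
      not_mem_associatedPrimes_of_regular hs1m hs1reg
    have hex : ∃ r ∈ maximalIdeal R, IsSMulRegular N (algebraMap R S r) := by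
      by_contra hc
      push_neg at hc
      have hF := associatedPrimes_finite (A := S) (N := N)
      have hsub : (maximalIdeal R : Set R) ⊆
          ⋃ q ∈ hF.toFinset, ((Ideal.comap (algebraMap R S) q : Ideal R) : Set R) := by
        intro r hr
        have : algebraMap R S r ∈ { s : S | IsSMulRegular N s }ᶜ := fun hreg' => hc r hr hreg'
        rw [← biUnion_associatedPrimes_eq_compl_regular S N] at this
        obtain ⟨q, hq, hzq⟩ := Set.mem_iUnion₂.mp this
        exact Set.mem_iUnion₂.mpr ⟨q, hF.mem_toFinset.mpr hq, hzq⟩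
      have := (Ideal.subset_union_prime (s := hF.toFinset)
        (f := fun q => Ideal.comap (algebraMap R S) q) ⊥ ⊥
        (fun q hq _ _ => haveI := (hF.mem_toFinset.mp hq).isPrime; Ideal.IsPrime.comap _)).mp hsub
      obtain ⟨q, hqF, hmq⟩ := this
      have hqAss := hF.mem_toFinset.mp hqF
      haveI hqprime : q.IsPrime := hqAss.isPrime
      have hcm : Ideal.comap (algebraMap R S) q = maximalIdeal R :=
        le_antisymm (le_maximalIdeal (Ideal.IsPrime.ne_top inferInstance)) hmq
      haveI hqmax : q.IsMaximal :=
        Ideal.isMaximal_of_isIntegral_of_isMaximal_comap q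
          (hcm ▸ IsLocalRing.maximalIdeal.isMaximal R)
      exact hAss (IsLocalRing.eq_maximalIdeal hqmax ▸ hqAss)
    obtain ⟨r, hrm, hrreg⟩ := hex
    have hfrn : algebraMap R S r ∈ maximalIdeal S := by
      rw [mem_maximalIdeal, mem_nonunits_iff]
      intro hu
      exact mem_nonunits_iff.mp ((mem_maximalIdeal r).mp hrm) (IsUnit.of_map (algebraMap R S) r hu)
    obtain ⟨ts', hts'len, hts'mem, hts'reg⟩ := exchange_reg k N (s1 :: ss1)
      hlen hmem hregcopy (algebraMap R S r) hfrn hrreg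
    obtain ⟨rs', hlen', hmem', hreg'⟩ := ih (QuotSMulTop (algebraMap R S r) N) ts'
      hts'len hts'mem hts'reg
    refine ⟨r :: rs', by simp [hlen'], ?_, ?_⟩
    · intro t ht
      rcases List.mem_cons.mp ht with rfl | ht
      · exact hrm
      · exact hmem' t ht
    · rw [List.map_cons]
      exact IsWeaklyRegular.cons hrreg hreg'


open RingTheory.Sequence in
lemma isRegular_map_algebraMap_iff {R S M : Type*} [CommRing R] [CommRing S] [Algebra R S]
    [AddCommGroup M] [Module R M] [Module S M] [IsScalarTower R S M] (rs : List R) :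
    IsRegular M (rs.map (algebraMap R S)) ↔ IsRegular M rs :=
  (AddEquiv.refl M).isRegular_congr <| List.forall₂_map_left_iff.mpr <|
    List.forall₂_same.mpr fun r _ => algebraMap_smul S r


/-- Let `R → S` be a finite local homomorphism of noetherian commutative local rings and
`M` a finitely generated `S`-module.  Then the depth of `M` over `S` equals the depth of
`M` over `R` (via restriction of scalars). -/
theorem stmt4 (R S M : Type*) [CommRing R] [CommRing S]
    [IsLocalRing R] [IsLocalRing S] [IsNoetherianRing R] [IsNoetherianRing S]
    [Algebra R S] [Module.Finite R S] [IsLocalHom (algebraMap R S)]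
    [AddCommGroup M] [Module S M] [Module R M] [IsScalarTower R S M]
    [Module.Finite S M] :
    moduleDepth S M = moduleDepth R M := by
  haveI : Module.Finite R M := Module.Finite.trans S M
  unfold moduleDepth
  congr 1
  ext n
  simp only [Set.mem_setOf_eq]
  constructor
  · rintro ⟨ss, hlen, hmem, hreg⟩
    haveI : Nontrivial M := hreg.nontrivial
    obtain ⟨rs, hlen', hmem', hreg'⟩ :=
      main_T (R := R) (S := S) ss.length M ss rfl hmem hreg.toIsWeaklyRegular
    refine ⟨rs, by rw [hlen', hlen], hmem', ?_⟩
    rw [IsLocalRing.isRegular_iff_isWeaklyRegular_of_subset_maximalIdeal hmem']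
    exact (RingTheory.Sequence.isWeaklyRegular_map_algebraMap_iff S M rs).mp hreg'
  · rintro ⟨rs, hlen, hmem, hreg⟩
    refine ⟨rs.map (algebraMap R S), by rw [List.length_map]; exact hlen, ?_, ?_⟩
    · intro t ht
      obtain ⟨r, hr, rfl⟩ := List.mem_map.mp ht
      rw [mem_maximalIdeal, mem_nonunits_iff]
      intro hu
      exact mem_nonunits_iff.mp ((mem_maximalIdeal r).mp (hmem r hr))
        (IsUnit.of_map (algebraMap R S) r hu)
    · exact (isRegular_map_algebraMap_iff rs).mpr hreg
end

section
/- Let 0 → K →^κ M →^φ M' → 0 be a short exact sequence of modules over a commutative ring, and 0 → N →^γ F →^ψ F' → 0 another short exact sequence of modules over the same ring, with F and F' flat. Then the kernel of φ ⊗ ψ : M ⊗ F → M' ⊗ F' equals the image of κ ⊗ id_F plus the image of id_M ⊗ γ, i.e., ker(φ ⊗ ψ) = im(κ ⊗ id_F) + im(id_M ⊗ γ). -/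
open TensorProduct

/-- Given short exact sequences `0 → K → M → M' → 0` and `0 → N → F → F' → 0` of
modules over a commutative ring, with `F` and `F'` flat, the kernel of
`φ ⊗ ψ : M ⊗ F → M' ⊗ F'` is `im(κ ⊗ id_F) + im(id_M ⊗ γ)`. -/
theorem stmt12 {R : Type*} [CommRing R]
    {K M M' N F F' : Type*}
    [AddCommGroup K] [AddCommGroup M] [AddCommGroup M']
    [AddCommGroup N] [AddCommGroup F] [AddCommGroup F']
    [Module R K] [Module R M] [Module R M']
    [Module R N] [Module R F] [Module R F']
    [Module.Flat R F] [Module.Flat R F']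
    (κ : K →ₗ[R] M) (φ : M →ₗ[R] M') (γ : N →ₗ[R] F) (ψ : F →ₗ[R] F')
    (hκ : Function.Injective κ) (hφ : Function.Surjective φ)
    (hMexact : LinearMap.range κ = LinearMap.ker φ)
    (hγ : Function.Injective γ) (hψ : Function.Surjective ψ)
    (hFexact : LinearMap.range γ = LinearMap.ker ψ) :
    LinearMap.ker (TensorProduct.map φ ψ) =
      LinearMap.range (TensorProduct.map κ (LinearMap.id : F →ₗ[R] F)) ⊔
        LinearMap.range (TensorProduct.map (LinearMap.id : M →ₗ[R] M) γ) := by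
  rw [TensorProduct.map_ker (LinearMap.exact_iff.mpr hMexact.symm) hφ
    (LinearMap.exact_iff.mpr hFexact.symm) hψ]
  rw [sup_comm]
  rfl
end
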